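/- Under the Basic Assumption, suppose θ^ν·|τ^ν − τ| → 0, σ^ν, θ^ν → ∞, and there exist x ∈ X, y ∈ Y, and λ ∈ [0,∞) with f(x,y) < ∞, H(x,y) ∈ D, and g(x,y) ≤ inf_{z∈Y} [ g(x,z) + λ·dist(H(x,z), D) ] + τ. For each ν let (x^ν, y^ν, u^ν, α^ν, λ^ν) be an ε^ν-optimal solution of (P)^ν with {ε^ν} bounded. If along a subsequence N ⊂ ℕ one has (x^ν, y^ν, u^ν, α^ν, λ^ν) → (x̂, ŷ, û, α̂, λ̂) as ν → ∞ in N, then (x̂, ŷ) is feasible in (P), i.e., x̂ ∈ X and ŷ ∈ τ-argmin_{z∈Y} { g(x̂,z) | H(x̂,z) ∈ D }. -/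

import Mathlib

open Filter Topology Metric Set

attribute [local instance] Classical.propDecidable

noncomputable section

/-- `ℝ^n` with the Euclidean norm. -/
abbrev Rn (n : ℕ) : Type := EuclideanSpace ℝ (Fin n)

variable {n m : ℕ} {Q : Type*} [NormedAddCommGroup Q]

/-- `(x, y)` is feasible in the bilevel problem (P): `x ∈ X` and
`y ∈ τ-argmin_{z ∈ Y} { g(x,z) | H(x,z) ∈ D }`. -/
def PFeas (X : Set (Rn n)) (Y : Set (Rn m)) (D : Set Q)
    (g : Rn n × Rn m → ℝ) (H : Rn n × Rn m → Q) (τ : ℝ)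
    (x : Rn n) (y : Rn m) : Prop :=
  x ∈ X ∧ y ∈ Y ∧ H (x, y) ∈ D ∧
    ∀ z ∈ Y, H (x, z) ∈ D → g (x, y) ≤ g (x, z) + τ

/-- The minimum value `𝔪` of (P). -/
def PVal (X : Set (Rn n)) (Y : Set (Rn m)) (D : Set Q)
    (f : Rn n × Rn m → EReal) (g : Rn n × Rn m → ℝ) (H : Rn n × Rn m → Q)
    (τ : ℝ) : EReal :=
  ⨅ (x : Rn n) (y : Rn m) (_ : PFeas X Y D g H τ x y), f (x, y)

/-- Optimal solution of (P): feasible, finite objective value attaining `𝔪`. -/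
def POpt (X : Set (Rn n)) (Y : Set (Rn m)) (D : Set Q)
    (f : Rn n × Rn m → EReal) (g : Rn n × Rn m → ℝ) (H : Rn n × Rn m → Q)
    (τ : ℝ) (x : Rn n) (y : Rn m) : Prop :=
  PFeas X Y D g H τ x y ∧ f (x, y) ≠ ⊤ ∧ f (x, y) = PVal X Y D f g H τ

/-- Feasibility in the alternative problem (P)^ν with data `Yn, gn, Hn, lamBar, τn`. -/
def PnuFeas (X : Set (Rn n)) (Y : Set (Rn m)) (D : Set Q) (Yn : Set (Rn m))
    (gn : Rn n × Rn m → ℝ) (Hn : Rn n × Rn m → Q) (lamBar τn : ℝ)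
    (x : Rn n) (y : Rn m) (u : Q) (α lam : ℝ) : Prop :=
  x ∈ X ∧ y ∈ Y ∧ α ≤ 0 ∧ 0 ≤ lam ∧ lam ≤ lamBar ∧ Hn (x, y) + u ∈ D ∧
    ∀ z ∈ Yn, gn (x, y) + α ≤ gn (x, z) + lam * infDist (Hn (x, z)) D + τn

/-- Objective function of (P)^ν: `f^ν(x,y) + σ^ν ‖u‖ - θ^ν α`. -/
def PnuObj (fn : Rn n × Rn m → EReal) (σn θn : ℝ)
    (x : Rn n) (y : Rn m) (u : Q) (α : ℝ) : EReal :=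
  fn (x, y) + ((σn * ‖u‖ - θn * α : ℝ) : EReal)

/-- The minimum value `𝔪^ν` of (P)^ν. -/
def PnuVal (X : Set (Rn n)) (Y : Set (Rn m)) (D : Set Q) (Yn : Set (Rn m))
    (fn : Rn n × Rn m → EReal) (gn : Rn n × Rn m → ℝ) (Hn : Rn n × Rn m → Q)
    (σn θn lamBar τn : ℝ) : EReal :=
  ⨅ (x : Rn n) (y : Rn m) (u : Q) (α : ℝ) (lam : ℝ)
    (_ : PnuFeas X Y D Yn gn Hn lamBar τn x y u α lam),
    PnuObj fn σn θn x y u α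

/-- `ε`-optimal solution of (P)^ν: feasible with finite objective value at most `𝔪^ν + ε`. -/
def PnuEps (X : Set (Rn n)) (Y : Set (Rn m)) (D : Set Q) (Yn : Set (Rn m))
    (fn : Rn n × Rn m → EReal) (gn : Rn n × Rn m → ℝ) (Hn : Rn n × Rn m → Q)
    (σn θn lamBar τn ε : ℝ)
    (x : Rn n) (y : Rn m) (u : Q) (α lam : ℝ) : Prop :=
  PnuFeas X Y D Yn gn Hn lamBar τn x y u α lam ∧
    PnuObj fn σn θn x y u α ≠ ⊤ ∧
    PnuObj fn σn θn x y u α ≤ PnuVal X Y D Yn fn gn Hn σn θn lamBar τn + (ε : EReal)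

/-- The value function `V(x,u) = inf_{y ∈ Y} { g(x,y) | H(x,y) + u ∈ D }`. -/
def Vfun (Y : Set (Rn m)) (D : Set Q)
    (g : Rn n × Rn m → ℝ) (H : Rn n × Rn m → Q)
    (x : Rn n) (u : Q) : EReal :=
  ⨅ (y : Rn m) (_ : y ∈ Y ∧ H (x, y) + u ∈ D), (g (x, y) : EReal)

/-- The value function `V` is calm at `x` with penalty threshold `lam`. -/
def CalmAtWith (Y : Set (Rn m)) (D : Set Q)
    (g : Rn n × Rn m → ℝ) (H : Rn n × Rn m → Q)
    (x : Rn n) (lam : ℝ) : Prop :=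
  0 ≤ lam ∧ ∀ u : Q,
    Vfun Y D g H x 0 - ((lam * ‖u‖ : ℝ) : EReal) ≤ Vfun Y D g H x u

/-- The value function `V` is calm at `x`. -/
def CalmAt (Y : Set (Rn m)) (D : Set Q)
    (g : Rn n × Rn m → ℝ) (H : Rn n × Rn m → Q) (x : Rn n) : Prop :=
  ∃ lam : ℝ, CalmAtWith Y D g H x lam

/-- The value function `V` is locally calm at `xbar`. -/
def LocallyCalmAt (Y : Set (Rn m)) (D : Set Q)
    (g : Rn n × Rn m → ℝ) (H : Rn n × Rn m → Q) (xbar : Rn n) : Prop :=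
  ∃ lam ρ : ℝ, 0 ≤ lam ∧ 0 < ρ ∧
    ∀ x ∈ Metric.closedBall xbar ρ, ∀ u : Q,
      Vfun Y D g H x 0 - ((lam * ‖u‖ : ℝ) : EReal) ≤ Vfun Y D g H x u

/-- The penalty-based value function `μ(x,λ) = inf_{y ∈ S} [g(x,y) + λ dist(H(x,y), D)]`. -/
def muSet (S : Set (Rn m)) (D : Set Q)
    (g : Rn n × Rn m → ℝ) (H : Rn n × Rn m → Q)
    (x : Rn n) (lam : ℝ) : EReal :=
  ⨅ (y : Rn m) (_ : y ∈ S), ((g (x, y) + lam * infDist (H (x, y)) D : ℝ) : EReal)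

/-- The Basic Assumption (Assumption 2.1). -/
structure BasicAssumption (X : Set (Rn n)) (Y : Set (Rn m)) (D : Set Q)
    (Yν : ℕ → Set (Rn m))
    (f : Rn n × Rn m → EReal) (fν : ℕ → Rn n × Rn m → EReal)
    (g : Rn n × Rn m → ℝ) (gν : ℕ → Rn n × Rn m → ℝ)
    (H : Rn n × Rn m → Q) (Hν : ℕ → Rn n × Rn m → Q)
    (σ θ lamBar τν δ η : ℕ → ℝ) : Prop where
  X_nonempty : X.Nonempty
  X_closed : IsClosed X
  Y_nonempty : Y.Nonempty
  Y_closed : IsClosed Y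
  D_nonempty : D.Nonempty
  D_closed : IsClosed D
  Yν_nonempty : ∀ ν, (Yν ν).Nonempty
  Yν_subset : ∀ ν, Yν ν ⊆ Y
  Yν_conv : ∀ y : Rn m,
    Tendsto (fun ν => infDist y (Yν ν)) atTop (𝓝 (infDist y Y))
  δ_lim : Tendsto δ atTop (𝓝 0)
  g_err : ∀ ν, ∀ x ∈ X, ∀ y ∈ Y, |gν ν (x, y) - g (x, y)| ≤ δ ν
  g_cont : ContinuousOn g (X ×ˢ Y)
  η_lim : Tendsto η atTop (𝓝 0)
  H_err : ∀ ν, ∀ x ∈ X, ∀ y ∈ Y,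
    |infDist (Hν ν (x, y)) D - infDist (H (x, y)) D| ≤ η ν
  H_cont : ContinuousOn H (X ×ˢ Y)
  f_ne_bot : ∀ p, f p ≠ ⊥
  fν_ne_bot : ∀ ν p, fν ν p ≠ ⊥
  f_limsup : ∀ x ∈ X, ∀ y ∈ Y,
    limsup (fun ν => fν ν (x, y)) atTop ≤ f (x, y)
  f_liminf : ∀ x ∈ X, ∀ y ∈ Y, ∀ (xs : ℕ → Rn n) (ys : ℕ → Rn m),
    (∀ ν, xs ν ∈ X) → (∀ ν, ys ν ∈ Y) →
    Tendsto xs atTop (𝓝 x) → Tendsto ys atTop (𝓝 y) →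
    f (x, y) ≤ liminf (fun ν => fν ν (xs ν, ys ν)) atTop
  σ_nonneg : ∀ ν, 0 ≤ σ ν
  θ_nonneg : ∀ ν, 0 ≤ θ ν
  lamBar_nonneg : ∀ ν, 0 ≤ lamBar ν
  τν_nonneg : ∀ ν, 0 ≤ τν ν
  lamBar_top : Tendsto lamBar atTop atTop
  ση_lim : Tendsto (fun ν => σ ν * η ν) atTop (𝓝 0)
  θlamη_lim : Tendsto (fun ν => θ ν * lamBar ν * η ν) atTop (𝓝 0)
  θδ_lim : Tendsto (fun ν => θ ν * δ ν) atTop (𝓝 0)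

/-!
Test (P)^ν at the point `(x0, y0)` of (2.4), with `u` a nearest-point correction of
`H^ν(x0, y0)` (so `‖u‖ ≤ η^ν`), the multiplier `lam0`, and
`α = -(|τ^ν - τ| + 2 δ^ν + lam0 η^ν)`: its objective value `f^ν(x0, y0) + o(1)` bounds `𝔪^ν`
from above, while the liminf condition bounds `f^ν(x^ν, y^ν)` from below along the subsequence.
So `σ^ν ‖u^ν‖ - θ^ν α^ν` stays bounded, and `σ^ν, θ^ν → ∞` force `u^ν → 0` and `α^ν → 0`.
Hence `H(x̂, ŷ) ∈ D`, and the lower-level constraint of (P)^ν, tested at points of `Y^ν`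
approaching a feasible `z ∈ Y`, passes to the limit as `g(x̂, ŷ) ≤ g(x̂, z) + τ`.
-/

theorem tendsto_zero_of_mul_le_of_tendsto_atTop {ι : Type*} {l : Filter ι} {a b : ι → ℝ} {C : ℝ}
    (ha : ∀ᶠ i in l, 0 ≤ a i) (hb : Tendsto b l atTop) (hC : ∀ᶠ i in l, b i * a i ≤ C) :
    Tendsto a l (𝓝 0) := by
  refine squeeze_zero' ha (g := fun i => C / b i) ?_ (tendsto_const_nhds.div_atTop hb)
  filter_upwards [hC, hb.eventually_gt_atTop 0] with i hi hbi
  rwa [le_div_iff₀ hbi, mul_comm]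

theorem tendsto_zero_of_mul_sub_mul_le {ι : Type*} {l : Filter ι} {a b s t : ι → ℝ} {C : ℝ}
    (ha : ∀ i, 0 ≤ a i) (hb : ∀ i, b i ≤ 0) (hs : ∀ i, 0 ≤ s i) (ht : ∀ i, 0 ≤ t i)
    (hs_top : Tendsto s l atTop) (ht_top : Tendsto t l atTop)
    (hC : ∀ᶠ i in l, s i * a i - t i * b i ≤ C) :
    Tendsto a l (𝓝 0) ∧ Tendsto b l (𝓝 0) := by
  have hsa i := mul_nonneg (hs i) (ha i)
  have htb i := mul_nonpos_of_nonneg_of_nonpos (ht i) (hb i)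
  refine ⟨tendsto_zero_of_mul_le_of_tendsto_atTop (.of_forall ha) hs_top
    (hC.mono fun i hi => by linarith [htb i]), ?_⟩
  simpa using (tendsto_zero_of_mul_le_of_tendsto_atTop (a := fun i => -b i)
    (.of_forall fun i => neg_nonneg.2 (hb i)) ht_top
    (hC.mono fun i hi => by linarith [mul_neg (t i) (b i), hsa i])).neg

theorem StrictMono.exists_extend_tendsto {E : Type*} [TopologicalSpace E] {φ : ℕ → ℕ}
    (hφ : StrictMono φ) {S : Set E} {v : ℕ → E} {l : E} (hv : ∀ k, v k ∈ S) (hl : l ∈ S)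
    (h : Tendsto v atTop (𝓝 l)) :
    ∃ w : ℕ → E, (∀ ν, w ν ∈ S) ∧ Tendsto w atTop (𝓝 l) ∧ ∀ k, w (φ k) = v k := by
  have hw : ∀ (T : Set E) ν, (∀ k, φ k = ν → v k ∈ T) → l ∈ T →
      Function.extend φ v (fun _ => l) ν ∈ T := by
    intro T ν hvT hlT
    by_cases hν : ∃ k, φ k = ν
    · obtain ⟨k, rfl⟩ := hν
      rw [hφ.injective.extend_apply]
      exact hvT k rfl
    · rwa [Function.extend_apply' _ _ _ hν]
  refine ⟨_, fun ν => hw S ν (fun k _ => hv k) hl, tendsto_atTop'.2 fun s hs => ?_,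
    hφ.injective.extend_apply v _⟩
  obtain ⟨K, hK⟩ := tendsto_atTop'.1 h s hs
  exact ⟨φ K, fun ν hν => hw s ν (fun k hk => hK k (hφ.le_iff_le.1 (hk ▸ hν)))
    (mem_of_mem_nhds hs)⟩

theorem exists_tendsto_of_infDist_tendsto_zero {E : Type*} [PseudoMetricSpace E]
    {S : ℕ → Set E} {z : E} (hS : ∀ ν, (S ν).Nonempty)
    (h : Tendsto (fun ν => infDist z (S ν)) atTop (𝓝 0)) :
    ∃ zs : ℕ → E, (∀ ν, zs ν ∈ S ν) ∧ Tendsto zs atTop (𝓝 z) := by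
  have hpick : ∀ ν : ℕ, ∃ w ∈ S ν, dist z w < infDist z (S ν) + 1 / (ν + 1) := fun ν =>
    (infDist_lt_iff (hS ν)).1 (lt_add_of_pos_right _ Nat.one_div_pos_of_nat)
  choose zs hzs hdist using hpick
  refine ⟨zs, hzs, tendsto_iff_dist_tendsto_zero.2 ?_⟩
  refine squeeze_zero (fun _ => dist_nonneg) (fun ν => (dist_comm z (zs ν) ▸ hdist ν).le) ?_
  simpa using h.add tendsto_one_div_add_atTop_nhds_zero_nat

theorem ContinuousOn.tendsto_apply_prodMk {α β γ ι : Type*} [TopologicalSpace α]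
    [TopologicalSpace β] [TopologicalSpace γ] {f : α × β → γ} {s : Set α} {t : Set β}
    (hf : ContinuousOn f (s ×ˢ t)) {a : α} {b : β} (ha : a ∈ s) (hb : b ∈ t) {l : Filter ι}
    {x : ι → α} {y : ι → β} (hxs : ∀ i, x i ∈ s) (hyt : ∀ i, y i ∈ t)
    (hx : Tendsto x l (𝓝 a)) (hy : Tendsto y l (𝓝 b)) :
    Tendsto (fun i => f (x i, y i)) l (𝓝 (f (a, b))) :=
  (hf (a, b) ⟨ha, hb⟩).tendsto.comp
    (tendsto_nhdsWithin_iff.2 ⟨hx.prodMk_nhds hy, .of_forall fun i => ⟨hxs i, hyt i⟩⟩)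

theorem exists_add_mem_norm_eq_infDist {E : Type*} [NormedAddCommGroup E] [ProperSpace E]
    {D : Set E} (hD : IsClosed D) (hne : D.Nonempty) (a : E) :
    ∃ u, a + u ∈ D ∧ ‖u‖ = infDist a D := by
  obtain ⟨d, hd, hdist⟩ := hD.exists_infDist_eq_dist hne a
  exact ⟨d - a, by simpa using hd, by rw [hdist, dist_eq_norm, norm_sub_rev]⟩

theorem muSet_le {S : Set (Rn m)} {D : Set Q} {g : Rn n × Rn m → ℝ} {H : Rn n × Rn m → Q}
    {x : Rn n} {lam : ℝ} {z : Rn m} (hz : z ∈ S) :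
    muSet S D g H x lam ≤ ((g (x, z) + lam * infDist (H (x, z)) D : ℝ) : EReal) :=
  iInf₂_le z hz

theorem pnuVal_le_pnuObj {X : Set (Rn n)} {Y : Set (Rn m)} {D : Set Q} {Yn : Set (Rn m)}
    {fn : Rn n × Rn m → EReal} {gn : Rn n × Rn m → ℝ} {Hn : Rn n × Rn m → Q}
    {σn θn lamBar τn : ℝ} {x : Rn n} {y : Rn m} {u : Q} {α lam : ℝ}
    (h : PnuFeas X Y D Yn gn Hn lamBar τn x y u α lam) :
    PnuVal X Y D Yn fn gn Hn σn θn lamBar τn ≤ PnuObj fn σn θn x y u α :=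
  iInf_le_of_le x <| iInf_le_of_le y <| iInf_le_of_le u <| iInf_le_of_le α <|
    iInf_le_of_le lam <| iInf_le _ h

theorem PnuEps.penalty_le {X : Set (Rn n)} {Y : Set (Rn m)} {D : Set Q} {Yn : Set (Rn m)}
    {fn : Rn n × Rn m → EReal} {gn : Rn n × Rn m → ℝ} {Hn : Rn n × Rn m → Q}
    {σn θn lamBar τn ε : ℝ} {x : Rn n} {y : Rn m} {u : Q} {α lam : ℝ}
    (h : PnuEps X Y D Yn fn gn Hn σn θn lamBar τn ε x y u α lam) {c R : ℝ}
    (hc : (c : EReal) ≤ fn (x, y)) (hR : PnuVal X Y D Yn fn gn Hn σn θn lamBar τn ≤ R) :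
    c + (σn * ‖u‖ - θn * α) ≤ R + ε := by
  have : ((c + (σn * ‖u‖ - θn * α) : ℝ) : EReal) ≤ ((R + ε : ℝ) : EReal) :=
    calc ((c + (σn * ‖u‖ - θn * α) : ℝ) : EReal)
        = (c : EReal) + ((σn * ‖u‖ - θn * α : ℝ) : EReal) := EReal.coe_add _ _
      _ ≤ PnuObj fn σn θn x y u α := add_le_add_left hc _
      _ ≤ PnuVal X Y D Yn fn gn Hn σn θn lamBar τn + (ε : EReal) := h.2.2
      _ ≤ (R : EReal) + (ε : EReal) := add_le_add_left hR _
      _ = ((R + ε : ℝ) : EReal) := (EReal.coe_add _ _).symm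
  exact_mod_cast this

namespace BasicAssumption

variable {X : Set (Rn n)} {Y : Set (Rn m)} {D : Set Q} {Yν : ℕ → Set (Rn m)}
  {f : Rn n × Rn m → EReal} {fν : ℕ → Rn n × Rn m → EReal}
  {g : Rn n × Rn m → ℝ} {gν : ℕ → Rn n × Rn m → ℝ}
  {H : Rn n × Rn m → Q} {Hν : ℕ → Rn n × Rn m → Q}
  {σ θ lamBar τν δ η : ℕ → ℝ}

theorem δ_nonneg (ba : BasicAssumption X Y D Yν f fν g gν H Hν σ θ lamBar τν δ η) (ν : ℕ) :
    0 ≤ δ ν :=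
  let ⟨x, hx⟩ := ba.X_nonempty
  let ⟨y, hy⟩ := ba.Y_nonempty
  (abs_nonneg _).trans (ba.g_err ν x hx y hy)

theorem η_nonneg (ba : BasicAssumption X Y D Yν f fν g gν H Hν σ θ lamBar τν δ η) (ν : ℕ) :
    0 ≤ η ν :=
  let ⟨x, hx⟩ := ba.X_nonempty
  let ⟨y, hy⟩ := ba.Y_nonempty
  (abs_nonneg _).trans (ba.H_err ν x hx y hy)

theorem tendsto_θ_mul_η (ba : BasicAssumption X Y D Yν f fν g gν H Hν σ θ lamBar τν δ η) :
    Tendsto (fun ν => θ ν * η ν) atTop (𝓝 0) :=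
  tendsto_zero_of_mul_le_of_tendsto_atTop
    (.of_forall fun ν => mul_nonneg (ba.θ_nonneg ν) (ba.η_nonneg ν)) ba.lamBar_top
    ((ba.θlamη_lim.eventually (eventually_le_nhds zero_lt_one)).mono fun ν h => by
      rwa [mul_left_comm, ← mul_assoc])

theorem pnuFeas_of_le_muSet
    (ba : BasicAssumption X Y D Yν f fν g gν H Hν σ θ lamBar τν δ η)
    {τ : ℝ} {x0 : Rn n} {y0 : Rn m} {lam0 : ℝ} (hx0 : x0 ∈ X) (hy0 : y0 ∈ Y)
    (hlam0 : 0 ≤ lam0) (hg0 : (g (x0, y0) : EReal) ≤ muSet Y D g H x0 lam0 + (τ : EReal))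
    {ν : ℕ} (hlamν : lam0 ≤ lamBar ν) {u : Q} (hu : Hν ν (x0, y0) + u ∈ D) :
    PnuFeas X Y D (Yν ν) (gν ν) (Hν ν) (lamBar ν) (τν ν) x0 y0 u
      (-(|τν ν - τ| + 2 * δ ν + lam0 * η ν)) lam0 := by
  refine ⟨hx0, hy0, ?_, hlam0, hlamν, hu, fun z hzν => ?_⟩
  · have := mul_nonneg hlam0 (ba.η_nonneg ν)
    linarith [abs_nonneg (τν ν - τ), ba.δ_nonneg ν]
  have hz := ba.Yν_subset ν hzν
  have hmu : g (x0, y0) ≤ g (x0, z) + lam0 * infDist (H (x0, z)) D + τ := by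
    have := hg0.trans (add_le_add_left (muSet_le hz) _)
    exact_mod_cast this
  have hH : infDist (H (x0, z)) D ≤ infDist (Hν ν (x0, z)) D + η ν := by
    linarith [(abs_le.1 (ba.H_err ν x0 hx0 z hz)).1]
  have hlamH := (mul_le_mul_of_nonneg_left hH hlam0).trans_eq (mul_add _ _ _)
  linarith [(abs_le.1 (ba.g_err ν x0 hx0 y0 hy0)).2, (abs_le.1 (ba.g_err ν x0 hx0 z hz)).1,
    neg_abs_le (τν ν - τ)]

theorem pnuVal_le [ProperSpace Q]
    (ba : BasicAssumption X Y D Yν f fν g gν H Hν σ θ lamBar τν δ η)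
    {τ : ℝ} {x0 : Rn n} {y0 : Rn m} {lam0 : ℝ} (hx0 : x0 ∈ X) (hy0 : y0 ∈ Y)
    (hlam0 : 0 ≤ lam0) (hH0 : H (x0, y0) ∈ D)
    (hg0 : (g (x0, y0) : EReal) ≤ muSet Y D g H x0 lam0 + (τ : EReal))
    {ν : ℕ} (hlamν : lam0 ≤ lamBar ν) :
    PnuVal X Y D (Yν ν) (fν ν) (gν ν) (Hν ν) (σ ν) (θ ν) (lamBar ν) (τν ν) ≤
      fν ν (x0, y0) + ((σ ν * η ν + θ ν * (|τν ν - τ| + 2 * δ ν + lam0 * η ν) : ℝ) : EReal) := by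
  obtain ⟨u, hu, hnorm⟩ := exists_add_mem_norm_eq_infDist ba.D_closed ba.D_nonempty (Hν ν (x0, y0))
  have hu_le : ‖u‖ ≤ η ν := by
    linarith [(abs_le.1 (ba.H_err ν x0 hx0 y0 hy0)).2, infDist_zero_of_mem hH0]
  refine (pnuVal_le_pnuObj (ba.pnuFeas_of_le_muSet hx0 hy0 hlam0 hg0 hlamν hu)).trans ?_
  refine add_le_add_right (EReal.coe_le_coe_iff.2 ?_) _
  nlinarith [mul_le_mul_of_nonneg_left hu_le (ba.σ_nonneg ν)]

theorem exists_pnuVal_le [ProperSpace Q]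
    (ba : BasicAssumption X Y D Yν f fν g gν H Hν σ θ lamBar τν δ η)
    {τ : ℝ} (hrate : Tendsto (fun ν => θ ν * |τν ν - τ|) atTop (𝓝 0))
    {x0 : Rn n} {y0 : Rn m} {lam0 : ℝ} (hx0 : x0 ∈ X) (hy0 : y0 ∈ Y) (hlam0 : 0 ≤ lam0)
    (hf0 : f (x0, y0) ≠ ⊤) (hH0 : H (x0, y0) ∈ D)
    (hg0 : (g (x0, y0) : EReal) ≤ muSet Y D g H x0 lam0 + (τ : EReal)) :
    ∃ R : ℝ, ∀ᶠ ν in atTop,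
      PnuVal X Y D (Yν ν) (fν ν) (gν ν) (Hν ν) (σ ν) (θ ν) (lamBar ν) (τν ν) ≤ R := by
  obtain ⟨r, hr⟩ : ∃ r : ℝ, ∀ᶠ ν in atTop, fν ν (x0, y0) ≤ r := by
    obtain ⟨r, hfr, -⟩ := EReal.lt_iff_exists_real_btwn.1 (lt_top_iff_ne_top.2 hf0)
    exact ⟨r, (eventually_lt_of_limsup_lt ((ba.f_limsup x0 hx0 y0 hy0).trans_lt hfr)).mono
      fun _ h => h.le⟩
  have hcost : Tendsto (fun ν => σ ν * η ν + θ ν * (|τν ν - τ| + 2 * δ ν + lam0 * η ν))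
      atTop (𝓝 0) := by
    have := ba.ση_lim.add (hrate.add ((ba.θδ_lim.const_mul 2).add
      (ba.tendsto_θ_mul_η.const_mul lam0)))
    simp only [mul_zero, add_zero] at this
    exact this.congr fun ν => by ring
  refine ⟨r + 1, ?_⟩
  filter_upwards [hr, hcost.eventually (eventually_le_nhds one_pos),
    ba.lamBar_top.eventually_ge_atTop lam0] with ν hrν hcostν hlamν
  calc _ ≤ _ := ba.pnuVal_le hx0 hy0 hlam0 hH0 hg0 hlamν
    _ ≤ (r : EReal) + ((1 : ℝ) : EReal) := add_le_add hrν (EReal.coe_le_coe_iff.2 hcostν)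
    _ = ((r + 1 : ℝ) : EReal) := (EReal.coe_add _ _).symm

theorem exists_le_fν_comp
    (ba : BasicAssumption X Y D Yν f fν g gν H Hν σ θ lamBar τν δ η)
    {φ : ℕ → ℕ} (hφ : StrictMono φ) {xs : ℕ → Rn n} {ys : ℕ → Rn m}
    (hxs : ∀ k, xs k ∈ X) (hys : ∀ k, ys k ∈ Y) {hatx : Rn n} {haty : Rn m} (hhatx : hatx ∈ X)
    (hhaty : haty ∈ Y) (hx : Tendsto xs atTop (𝓝 hatx)) (hy : Tendsto ys atTop (𝓝 haty)) :
    ∃ c : ℝ, ∀ᶠ k in atTop, (c : EReal) ≤ fν (φ k) (xs k, ys k) := by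
  -- `f_liminf` only speaks of full sequences: fill in the limit off the range of `φ`
  obtain ⟨xs', hxs'X, hxs', hxs'φ⟩ := hφ.exists_extend_tendsto hxs hhatx hx
  obtain ⟨ys', hys'Y, hys', hys'φ⟩ := hφ.exists_extend_tendsto hys hhaty hy
  obtain ⟨c, -, hc⟩ :=
    EReal.lt_iff_exists_real_btwn.1 (bot_lt_iff_ne_bot.2 (ba.f_ne_bot (hatx, haty)))
  have hlow := eventually_lt_of_lt_liminf
    (hc.trans_le (ba.f_liminf hatx hhatx haty hhaty xs' ys' hxs'X hys'Y hxs' hys'))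
  refine ⟨c, (hφ.tendsto_atTop.eventually hlow).mono fun k hk => ?_⟩
  simpa only [Function.comp, hxs'φ, hys'φ] using hk.le

theorem infDist_H_le
    (ba : BasicAssumption X Y D Yν f fν g gν H Hν σ θ lamBar τν δ η)
    {Yn : Set (Rn m)} {ν : ℕ} {τn : ℝ} {x : Rn n} {y : Rn m} {u : Q} {α lam : ℝ}
    (h : PnuFeas X Y D Yn (gν ν) (Hν ν) (lamBar ν) τn x y u α lam) :
    infDist (H (x, y)) D ≤ ‖u‖ + η ν := by
  obtain ⟨hx, hy, -, -, -, hu, -⟩ := h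
  have : infDist (Hν ν (x, y)) D ≤ ‖u‖ := by
    simpa using infDist_le_dist_of_mem (x := Hν ν (x, y)) hu
  linarith [(abs_le.1 (ba.H_err ν x hx y hy)).1]

theorem g_sub_δ_add_le
    (ba : BasicAssumption X Y D Yν f fν g gν H Hν σ θ lamBar τν δ η)
    {ν : ℕ} {x : Rn n} {y : Rn m} {u : Q} {α lam : ℝ}
    (h : PnuFeas X Y D (Yν ν) (gν ν) (Hν ν) (lamBar ν) (τν ν) x y u α lam)
    {z : Rn m} (hzν : z ∈ Yν ν) :
    g (x, y) - δ ν + α ≤ g (x, z) + δ ν + lam * (infDist (H (x, z)) D + η ν) + τν ν := by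
  obtain ⟨hx, hy, -, hlam, -, -, hlow⟩ := h
  have hz := ba.Yν_subset ν hzν
  have hH : infDist (Hν ν (x, z)) D ≤ infDist (H (x, z)) D + η ν := by
    linarith [(abs_le.1 (ba.H_err ν x hx z hz)).2]
  linarith [hlow z hzν, mul_le_mul_of_nonneg_left hH hlam,
    (abs_le.1 (ba.g_err ν x hx y hy)).1, (abs_le.1 (ba.g_err ν x hx z hz)).2]

variable {φ : ℕ → ℕ} {xs : ℕ → Rn n} {ys : ℕ → Rn m} {us : ℕ → Q} {αs lams : ℕ → ℝ}
  {hatx : Rn n} {haty : Rn m}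

theorem H_mem_of_tendsto
    (ba : BasicAssumption X Y D Yν f fν g gν H Hν σ θ lamBar τν δ η)
    (hφ : Tendsto φ atTop atTop)
    (hfeas : ∀ k, PnuFeas X Y D (Yν (φ k)) (gν (φ k)) (Hν (φ k)) (lamBar (φ k)) (τν (φ k))
      (xs k) (ys k) (us k) (αs k) (lams k))
    (hhatx : hatx ∈ X) (hhaty : haty ∈ Y) (hx : Tendsto xs atTop (𝓝 hatx))
    (hy : Tendsto ys atTop (𝓝 haty))
    (hu : Tendsto (fun k => ‖us k‖) atTop (𝓝 0)) :
    H (hatx, haty) ∈ D := by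
  have hlim : Tendsto (fun k => infDist (H (xs k, ys k)) D) atTop
      (𝓝 (infDist (H (hatx, haty)) D)) :=
    ((continuous_infDist_pt D).tendsto _).comp <| ba.H_cont.tendsto_apply_prodMk hhatx hhaty
      (fun k => (hfeas k).1) (fun k => (hfeas k).2.1) hx hy
  have hle := le_of_tendsto_of_tendsto' hlim (by simpa using hu.add (ba.η_lim.comp hφ))
    fun k => ba.infDist_H_le (hfeas k)
  exact (ba.D_closed.mem_iff_infDist_zero ba.D_nonempty).2 (le_antisymm hle infDist_nonneg)

theorem g_le_g_add_of_tendsto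
    (ba : BasicAssumption X Y D Yν f fν g gν H Hν σ θ lamBar τν δ η)
    (hφ : Tendsto φ atTop atTop) {τ : ℝ} (hτ : Tendsto τν atTop (𝓝 τ))
    (hfeas : ∀ k, PnuFeas X Y D (Yν (φ k)) (gν (φ k)) (Hν (φ k)) (lamBar (φ k)) (τν (φ k))
      (xs k) (ys k) (us k) (αs k) (lams k))
    (hhatx : hatx ∈ X) (hhaty : haty ∈ Y) (hx : Tendsto xs atTop (𝓝 hatx))
    (hy : Tendsto ys atTop (𝓝 haty))
    (hα : Tendsto αs atTop (𝓝 0)) {lam : ℝ} (hlam : Tendsto lams atTop (𝓝 lam))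
    {z : Rn m} (hz : z ∈ Y) (hHz : H (hatx, z) ∈ D) :
    g (hatx, haty) ≤ g (hatx, z) + τ := by
  obtain ⟨zs, hzsν, hzs⟩ := exists_tendsto_of_infDist_tendsto_zero ba.Yν_nonempty
    (by simpa [infDist_zero_of_mem hz] using ba.Yν_conv z)
  have hxX : ∀ k, xs k ∈ X := fun k => (hfeas k).1
  have hzsY : ∀ k, zs (φ k) ∈ Y := fun k => ba.Yν_subset _ (hzsν _)
  have hδ := ba.δ_lim.comp hφ
  have hL : Tendsto (fun k => g (xs k, ys k) - δ (φ k) + αs k) atTop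
      (𝓝 (g (hatx, haty) - 0 + 0)) :=
    ((ba.g_cont.tendsto_apply_prodMk hhatx hhaty hxX (fun k => (hfeas k).2.1) hx hy).sub
      hδ).add hα
  have hdist : Tendsto (fun k => infDist (H (xs k, zs (φ k))) D) atTop (𝓝 0) := by
    rw [← infDist_zero_of_mem hHz]
    exact ((continuous_infDist_pt D).tendsto _).comp
      (ba.H_cont.tendsto_apply_prodMk hhatx hz hxX hzsY hx (hzs.comp hφ))
  have hR : Tendsto (fun k => g (xs k, zs (φ k)) + δ (φ k)
      + lams k * (infDist (H (xs k, zs (φ k))) D + η (φ k)) + τν (φ k)) atTop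
      (𝓝 (g (hatx, z) + 0 + lam * (0 + 0) + τ)) :=
    (((ba.g_cont.tendsto_apply_prodMk hhatx hz hxX hzsY hx (hzs.comp hφ)).add hδ).add
      (hlam.mul (hdist.add (ba.η_lim.comp hφ)))).add (hτ.comp hφ)
  simpa using
    le_of_tendsto_of_tendsto' hL hR fun k => ba.g_sub_δ_add_le (hfeas k) (hzsν (φ k))

end BasicAssumption

theorem Pnu_cluster_feasible_general
    [NormedSpace ℝ Q] [FiniteDimensional ℝ Q]
    (X : Set (Rn n)) (Y : Set (Rn m)) (D : Set Q) (Yν : ℕ → Set (Rn m))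
    (f : Rn n × Rn m → EReal) (fν : ℕ → Rn n × Rn m → EReal)
    (g : Rn n × Rn m → ℝ) (gν : ℕ → Rn n × Rn m → ℝ)
    (H : Rn n × Rn m → Q) (Hν : ℕ → Rn n × Rn m → Q)
    (σ θ lamBar τν δ η : ℕ → ℝ) (τ : ℝ)
    (ba : BasicAssumption X Y D Yν f fν g gν H Hν σ θ lamBar τν δ η)
    (hrate : Tendsto (fun ν => θ ν * |τν ν - τ|) atTop (𝓝 0))
    (hσ : Tendsto σ atTop atTop) (hθ : Tendsto θ atTop atTop)
    -- the extra assumption (2.4): x ∈ X, y ∈ Y, λ ∈ [0,∞) with f(x,y) < ∞,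
    -- H(x,y) ∈ D and g(x,y) ≤ inf_{z ∈ Y}[g(x,z) + λ dist(H(x,z), D)] + τ
    (x0 : Rn n) (y0 : Rn m) (lam0 : ℝ)
    (hx0 : x0 ∈ X) (hy0 : y0 ∈ Y) (hlam0 : 0 ≤ lam0)
    (hf0 : f (x0, y0) ≠ ⊤) (hH0 : H (x0, y0) ∈ D)
    (hg0 : (g (x0, y0) : EReal) ≤ muSet Y D g H x0 lam0 + (τ : EReal))
    -- ε^ν-optimal solutions with bounded tolerances
    (ε : ℕ → ℝ) (hεbdd : ∃ c : ℝ, ∀ ν, ε ν ≤ c)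
    (xs : ℕ → Rn n) (ys : ℕ → Rn m) (us : ℕ → Q) (αs lams : ℕ → ℝ)
    (hsol : ∀ ν, PnuEps X Y D (Yν ν) (fν ν) (gν ν) (Hν ν)
      (σ ν) (θ ν) (lamBar ν) (τν ν) (ε ν) (xs ν) (ys ν) (us ν) (αs ν) (lams ν))
    -- convergence along a subsequence N
    (φ : ℕ → ℕ) (hφ : StrictMono φ)
    (hatx : Rn n) (haty : Rn m) (hatlam : ℝ)
    (hcx : Tendsto (fun k => xs (φ k)) atTop (𝓝 hatx))
    (hcy : Tendsto (fun k => ys (φ k)) atTop (𝓝 haty))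
    (hclam : Tendsto (fun k => lams (φ k)) atTop (𝓝 hatlam)) :
    PFeas X Y D g H τ hatx haty := by
  have hφ' := hφ.tendsto_atTop
  have hfeas k := (hsol (φ k)).1
  have hhatx : hatx ∈ X := ba.X_closed.mem_of_tendsto hcx (.of_forall fun k => (hfeas k).1)
  have hhaty : haty ∈ Y := ba.Y_closed.mem_of_tendsto hcy (.of_forall fun k => (hfeas k).2.1)
  obtain ⟨R, hR⟩ := ba.exists_pnuVal_le hrate hx0 hy0 hlam0 hf0 hH0 hg0
  obtain ⟨c, hc⟩ := ba.exists_le_fν_comp hφ (fun k => (hfeas k).1) (fun k => (hfeas k).2.1)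
    hhatx hhaty hcx hcy
  obtain ⟨cε, hcε⟩ := hεbdd
  have hpen : ∀ᶠ k in atTop, σ (φ k) * ‖us (φ k)‖ - θ (φ k) * αs (φ k) ≤ R + cε - c := by
    filter_upwards [hφ'.eventually hR, hc] with k hRk hck
    linarith [(hsol (φ k)).penalty_le hck hRk, hcε (φ k)]
  obtain ⟨hu, hα⟩ := tendsto_zero_of_mul_sub_mul_le (fun k => norm_nonneg (us (φ k)))
    (fun k => (hfeas k).2.2.1) (fun k => ba.σ_nonneg (φ k)) (fun k => ba.θ_nonneg (φ k))
    (hσ.comp hφ') (hθ.comp hφ') hpen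
  have hτ : Tendsto τν atTop (𝓝 τ) := tendsto_iff_dist_tendsto_zero.2 <|
    tendsto_zero_of_mul_le_of_tendsto_atTop (.of_forall fun _ => dist_nonneg) hθ
      (hrate.eventually (eventually_le_nhds zero_lt_one))
  exact ⟨hhatx, hhaty, ba.H_mem_of_tendsto hφ' hfeas hhatx hhaty hcx hcy hu,
    fun z hz hHz => ba.g_le_g_add_of_tendsto hφ' hτ hfeas hhatx hhaty hcx hcy hα hclam hz hHz⟩

/-- Theorem 2.2(c): cluster points of near-optimal solutions of (P)^ν are feasible in (P). -/
theorem Pnu_cluster_feasible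
    [NormedSpace ℝ Q] [FiniteDimensional ℝ Q]
    (X : Set (Rn n)) (Y : Set (Rn m)) (D : Set Q) (Yν : ℕ → Set (Rn m))
    (f : Rn n × Rn m → EReal) (fν : ℕ → Rn n × Rn m → EReal)
    (g : Rn n × Rn m → ℝ) (gν : ℕ → Rn n × Rn m → ℝ)
    (H : Rn n × Rn m → Q) (Hν : ℕ → Rn n × Rn m → Q)
    (σ θ lamBar τν δ η : ℕ → ℝ) (τ : ℝ) (hτ : 0 ≤ τ)
    (ba : BasicAssumption X Y D Yν f fν g gν H Hν σ θ lamBar τν δ η)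
    (hrate : Tendsto (fun ν => θ ν * |τν ν - τ|) atTop (𝓝 0))
    (hσ : Tendsto σ atTop atTop) (hθ : Tendsto θ atTop atTop)
    -- the extra assumption (2.4): x ∈ X, y ∈ Y, λ ∈ [0,∞) with f(x,y) < ∞,
    -- H(x,y) ∈ D and g(x,y) ≤ inf_{z ∈ Y}[g(x,z) + λ dist(H(x,z), D)] + τ
    (x0 : Rn n) (y0 : Rn m) (lam0 : ℝ)
    (hx0 : x0 ∈ X) (hy0 : y0 ∈ Y) (hlam0 : 0 ≤ lam0)
    (hf0 : f (x0, y0) ≠ ⊤) (hH0 : H (x0, y0) ∈ D)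
    (hg0 : (g (x0, y0) : EReal) ≤ muSet Y D g H x0 lam0 + (τ : EReal))
    -- ε^ν-optimal solutions with bounded tolerances
    (ε : ℕ → ℝ) (hε0 : ∀ ν, 0 ≤ ε ν) (hεbdd : ∃ c : ℝ, ∀ ν, ε ν ≤ c)
    (xs : ℕ → Rn n) (ys : ℕ → Rn m) (us : ℕ → Q) (αs lams : ℕ → ℝ)
    (hsol : ∀ ν, PnuEps X Y D (Yν ν) (fν ν) (gν ν) (Hν ν)
      (σ ν) (θ ν) (lamBar ν) (τν ν) (ε ν) (xs ν) (ys ν) (us ν) (αs ν) (lams ν))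
    -- convergence along a subsequence N
    (φ : ℕ → ℕ) (hφ : StrictMono φ)
    (hatx : Rn n) (haty : Rn m) (hatu : Q) (hatα hatlam : ℝ)
    (hcx : Tendsto (fun k => xs (φ k)) atTop (𝓝 hatx))
    (hcy : Tendsto (fun k => ys (φ k)) atTop (𝓝 haty))
    (hcu : Tendsto (fun k => us (φ k)) atTop (𝓝 hatu))
    (hcα : Tendsto (fun k => αs (φ k)) atTop (𝓝 hatα))
    (hclam : Tendsto (fun k => lams (φ k)) atTop (𝓝 hatlam)) :
    PFeas X Y D g H τ hatx haty :=
  Pnu_cluster_feasible_general X Y D Yν f fν g gν H Hν σ θ lamBar τν δ η τ ba hrate hσ hθ x0 y0 lam0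
    hx0 hy0 hlam0 hf0 hH0 hg0 ε hεbdd xs ys us αs lams hsol φ hφ hatx haty hatlam hcx hcy hclam
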